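/- Let (Ω, 𝓕, ℙ) be a probability space, X : Ω → 𝓧 a measurable map into a measurable space, W : Ω → ℝ a random variable taking values in {0,1}, and Y₀, Y₁ : Ω → ℝ integrable random variables. Let e(X) be a version of the conditional expectation E[W | σ(X)] and suppose there exists ε > 0 with ε ≤ e(X) ≤ 1 − ε almost surely. Assume the pair (Y₀, Y₁) is conditionally independent of W given σ(X). Define Y^obs = W·Y₁ + (1−W)·Y₀ and, for a constant C ∈ ℝ, Ẑ* = (Y^obs − C)·(W − e(X)) / (e(X)·(1 − e(X))). Then the unconditional expectation satisfies E[Ẑ*] = E[Y₁] − E[Y₀]. -/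

import Mathlib

/-!
For a binary treatment the shifted transformed outcome splits as
`W (Y₁ - C) / e - (1 - W) (Y₀ - C) / (1 - e)`, and each term is an inverse-propensity-weighted
outcome `Y A / E[A | σ(X)]` with `A = W` or `A = 1 - W`. Conditional independence given `σ(X)`
means independence under the regular conditional probability `condExpKernel` at almost every
point, so the product rule for integrals gives `E[Y A | σ(X)] = E[Y | σ(X)] E[A | σ(X)]`.
Pulling the `σ(X)`-measurable weight `1 / E[A | σ(X)]` out of the conditional expectation, the
propensity cancels and the tower property leaves `E[Y]`; the shifts by `C` cancel in the
difference.
-/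

open MeasureTheory ProbabilityTheory

lemma transformed_outcome_eq_sub_ipw {w e : ℝ} (hw : w = 0 ∨ w = 1) (he₀ : e ≠ 0)
    (he₁ : 1 - e ≠ 0) (y₀ y₁ C : ℝ) :
    ((w * y₁ + (1 - w) * y₀) - C) * (w - e) / (e * (1 - e))
      = (y₁ - C) * w / e - (y₀ - C) * (1 - w) / (1 - e) := by
  rcases hw with rfl | rfl <;> field_simp <;> ring

namespace MeasureTheory

variable {Ω : Type*} {m mΩ : MeasurableSpace Ω} {μ : Measure Ω}

lemma Integrable.div_of_ae_le {f p : Ω → ℝ} (hf : Integrable f μ) (hp : AEMeasurable p μ)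
    {ε : ℝ} (hε : 0 < ε) (hpε : ∀ᵐ ω ∂μ, ε ≤ p ω) : Integrable (fun ω ↦ f ω / p ω) μ := by
  have hbound : ∀ᵐ ω ∂μ, ‖(p ω)⁻¹‖ ≤ ε⁻¹ := by
    filter_upwards [hpε] with ω hω
    rw [norm_inv, Real.norm_of_nonneg (hε.le.trans hω)]
    exact inv_anti₀ hε hω
  simpa only [div_eq_inv_mul, Pi.inv_apply] using hf.bdd_mul hp.inv.aestronglyMeasurable hbound

lemma condExp_one_sub [IsFiniteMeasure μ] (hm : m ≤ mΩ) {f : Ω → ℝ} (hf : Integrable f μ) :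
    μ[fun ω ↦ 1 - f ω | m] =ᵐ[μ] fun ω ↦ 1 - μ[f | m] ω := by
  filter_upwards [condExp_sub (integrable_const 1) hf m] with ω hω
  exact hω.trans (by rw [Pi.sub_apply, condExp_const hm])

lemma integrable_mul_div_condExp (hm : m ≤ mΩ) {Y A : Ω → ℝ} (hY : Integrable Y μ)
    (hA : AEStronglyMeasurable A μ) {c : ℝ} (hA_bdd : ∀ᵐ ω ∂μ, ‖A ω‖ ≤ c) {ε : ℝ} (hε : 0 < ε)
    (hAε : ∀ᵐ ω ∂μ, ε ≤ μ[A | m] ω) :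
    Integrable (fun ω ↦ Y ω * A ω / μ[A | m] ω) μ :=
  (hY.mul_bdd hA hA_bdd).div_of_ae_le (stronglyMeasurable_condExp.mono hm).measurable.aemeasurable
    hε hAε

end MeasureTheory

namespace ProbabilityTheory

variable {Ω β γ : Type*} {m mΩ : MeasurableSpace Ω} [StandardBorelSpace Ω] {hm : m ≤ mΩ}
  {μ : Measure Ω} [IsFiniteMeasure μ] [MeasurableSpace β] [MeasurableSpace γ]

lemma CondIndepFun.congr {f f' : Ω → β} {g g' : Ω → γ} (h : CondIndepFun m hm f g μ)
    (hf : f =ᵐ[μ] f') (hg : g =ᵐ[μ] g') : CondIndepFun m hm f' g' μ := by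
  refine Kernel.IndepFun.congr' h (Measure.ae_ae_of_ae_comp ?_) (Measure.ae_ae_of_ae_comp ?_)
  · rwa [condExpKernel_comp_trim hm]
  · rwa [condExpKernel_comp_trim hm]

lemma CondIndepFun.ae_indepFun_condExpKernel
    [MeasurableSpace.CountableOrCountablyGenerated Ω (β × γ)] {f : Ω → β} {g : Ω → γ}
    (h : CondIndepFun m hm f g μ) (hf : Measurable f) (hg : Measurable g) :
    ∀ᵐ ω ∂μ, f ⟂ᵢ[condExpKernel μ m ω] g := by
  filter_upwards [ae_of_ae_trim hm ((condIndepFun_iff_map_prod_eq_prod_map_map hf hg).mp h)]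
    with ω hω
  rw [indepFun_iff_map_prod_eq_prod_map_map hf.aemeasurable hg.aemeasurable]
  simpa only [Kernel.map_apply _ hf, Kernel.map_apply _ hg, Kernel.map_apply _ (hf.prodMk hg),
    Kernel.prod_apply] using hω

lemma CondIndepFun.condExp_mul {f g : Ω → ℝ} (h : CondIndepFun m hm f g μ)
    (hf : Integrable f μ) (hg : Integrable g μ) (hfg : Integrable (f * g) μ) :
    μ[f * g | m] =ᵐ[μ] μ[f | m] * μ[g | m] := by
  obtain ⟨f', hf'_meas, hff'⟩ := hf.1
  obtain ⟨g', hg'_meas, hgg'⟩ := hg.1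
  have hfg' : f * g =ᵐ[μ] f' * g' := hff'.mul hgg'
  have hkernel {u : Ω → ℝ} (hu : Integrable u μ) := condExp_ae_eq_integral_condExpKernel hm hu
  filter_upwards [condExp_congr_ae hfg', condExp_congr_ae hff', condExp_congr_ae hgg',
    hkernel (hfg.congr hfg'), hkernel (hf.congr hff'), hkernel (hg.congr hgg'),
    (h.congr hff' hgg').ae_indepFun_condExpKernel hf'_meas.measurable hg'_meas.measurable]
    with ω h_fg h_f h_g hk_fg hk_f hk_g h_indep
  rw [Pi.mul_apply, h_fg, h_f, h_g, hk_fg, hk_f, hk_g]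
  exact h_indep.integral_mul_eq_mul_integral hf'_meas.aestronglyMeasurable
    hg'_meas.aestronglyMeasurable

lemma CondIndepFun.integral_mul_div_condExp {Y A : Ω → ℝ} (h : CondIndepFun m hm Y A μ)
    (hY : Integrable Y μ) (hA : AEStronglyMeasurable A μ) {c : ℝ} (hA_bdd : ∀ᵐ ω ∂μ, ‖A ω‖ ≤ c)
    {ε : ℝ} (hε : 0 < ε) (hAε : ∀ᵐ ω ∂μ, ε ≤ μ[A | m] ω) :
    ∫ ω, Y ω * A ω / μ[A | m] ω ∂μ = ∫ ω, Y ω ∂μ := by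
  have hA_int : Integrable A μ := (integrable_const c).mono' hA hA_bdd
  have hYA : Integrable (Y * A) μ := hY.mul_bdd hA hA_bdd
  have hweight : StronglyMeasurable[m] (μ[A | m])⁻¹ :=
    stronglyMeasurable_condExp.measurable.inv.stronglyMeasurable
  have hint : Integrable ((μ[A | m])⁻¹ * (Y * A)) μ :=
    (integrable_mul_div_condExp hm hY hA hA_bdd hε hAε).congr
      (ae_of_all _ fun _ ↦ div_eq_inv_mul _ _)
  calc ∫ ω, Y ω * A ω / μ[A | m] ω ∂μ = ∫ ω, μ[(μ[A | m])⁻¹ * (Y * A) | m] ω ∂μ := by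
        rw [integral_condExp hm]
        simp only [div_eq_inv_mul, Pi.mul_apply, Pi.inv_apply]
    _ = ∫ ω, μ[Y | m] ω ∂μ := by
        refine integral_congr_ae ?_
        filter_upwards [condExp_mul_of_stronglyMeasurable_left hweight hint hYA,
          h.condExp_mul hY hA_int hYA, hAε] with ω h_pull h_indep hω
        rw [h_pull, Pi.mul_apply, h_indep, Pi.mul_apply, Pi.inv_apply]
        field_simp [(hε.trans_le hω).ne']
    _ = ∫ ω, Y ω ∂μ := integral_condExp hm

lemma integral_ipw_contrast {Y₀ Y₁ A : Ω → ℝ} (h₁ : CondIndepFun m hm Y₁ A μ)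
    (h₀ : CondIndepFun m hm Y₀ (fun ω ↦ 1 - A ω) μ) (hY₀ : Integrable Y₀ μ)
    (hY₁ : Integrable Y₁ μ) (hA_meas : AEStronglyMeasurable A μ)
    (hA : ∀ᵐ ω ∂μ, A ω ∈ Set.Icc 0 1) {ε : ℝ} (hε : 0 < ε)
    (hp : ∀ᵐ ω ∂μ, ε ≤ μ[A | m] ω ∧ μ[A | m] ω ≤ 1 - ε) :
    ∫ ω, (Y₁ ω * A ω / μ[A | m] ω - Y₀ ω * (1 - A ω) / (1 - μ[A | m] ω)) ∂μ
      = (∫ ω, Y₁ ω ∂μ) - ∫ ω, Y₀ ω ∂μ := by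
  have hA_le : ∀ᵐ ω ∂μ, ‖A ω‖ ≤ 1 := hA.mono fun ω h ↦ by
    rw [Real.norm_of_nonneg h.1]; exact h.2
  have h1A_le : ∀ᵐ ω ∂μ, ‖1 - A ω‖ ≤ 1 := hA.mono fun ω h ↦ by
    rw [Real.norm_of_nonneg (by linarith [h.2])]; linarith [h.1]
  have h1A_meas : AEStronglyMeasurable (fun ω ↦ 1 - A ω) μ := aestronglyMeasurable_const.sub hA_meas
  have hcontrol := condExp_one_sub hm ((integrable_const (1 : ℝ)).mono' hA_meas hA_le)
  have hp₁ : ∀ᵐ ω ∂μ, ε ≤ μ[A | m] ω := hp.mono fun _ h ↦ h.1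
  have hp₀ : ∀ᵐ ω ∂μ, ε ≤ μ[fun ω ↦ 1 - A ω | m] ω := by
    filter_upwards [hp, hcontrol] with ω h h_eq
    rw [h_eq]
    linarith [h.2]
  calc ∫ ω, (Y₁ ω * A ω / μ[A | m] ω - Y₀ ω * (1 - A ω) / (1 - μ[A | m] ω)) ∂μ
      = ∫ ω, (Y₁ ω * A ω / μ[A | m] ω
          - Y₀ ω * (1 - A ω) / μ[fun ω ↦ 1 - A ω | m] ω) ∂μ := by
        refine integral_congr_ae ?_
        filter_upwards [hcontrol] with ω h_eq
        rw [h_eq]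
    _ = (∫ ω, Y₁ ω * A ω / μ[A | m] ω ∂μ)
          - ∫ ω, Y₀ ω * (1 - A ω) / μ[fun ω ↦ 1 - A ω | m] ω ∂μ :=
        integral_sub (integrable_mul_div_condExp hm hY₁ hA_meas hA_le hε hp₁)
          (integrable_mul_div_condExp hm hY₀ h1A_meas h1A_le hε hp₀)
    _ = (∫ ω, Y₁ ω ∂μ) - ∫ ω, Y₀ ω ∂μ := by
        rw [h₁.integral_mul_div_condExp hY₁ hA_meas hA_le hε hp₁,
          h₀.integral_mul_div_condExp hY₀ h1A_meas h1A_le hε hp₀]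

end ProbabilityTheory

/-- Unconditional unbiasedness of the constant-shifted transformed outcome:
`E[Ẑ*] = E[Y₁] − E[Y₀]`. -/
theorem transformed_outcome_shifted_expectation
    {Ω 𝓧 : Type*} [MeasureSpace Ω] [IsProbabilityMeasure (ℙ : Measure Ω)]
    [StandardBorelSpace Ω]
    [m𝓧 : MeasurableSpace 𝓧]
    (X : Ω → 𝓧) (hX : Measurable X)
    (W Y₀ Y₁ : Ω → ℝ)
    (hW : Measurable W) (hWbin : ∀ ω, W ω = 0 ∨ W ω = 1)
    (hY₀ : Integrable Y₀ ℙ) (hY₁ : Integrable Y₁ ℙ)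
    (e : Ω → ℝ) (he : e =ᵐ[ℙ] ℙ[W | m𝓧.comap X])
    (ε : ℝ) (hε : 0 < ε)
    (hbound : ∀ᵐ ω ∂ℙ, ε ≤ e ω ∧ e ω ≤ 1 - ε)
    (hunconf : CondIndepFun (m𝓧.comap X) hX.comap_le (fun ω => (Y₀ ω, Y₁ ω)) W ℙ)
    (C : ℝ) :
    ∫ ω, ((W ω * Y₁ ω + (1 - W ω) * Y₀ ω) - C) * (W ω - e ω) /
        (e ω * (1 - e ω)) ∂ℙ
      = (∫ ω, Y₁ ω ∂ℙ) - ∫ ω, Y₀ ω ∂ℙ := by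
  have hdecomp : (fun ω ↦ ((W ω * Y₁ ω + (1 - W ω) * Y₀ ω) - C) * (W ω - e ω) /
      (e ω * (1 - e ω))) =ᵐ[ℙ] fun ω ↦ (Y₁ ω - C) * W ω / ℙ[W | m𝓧.comap X] ω
        - (Y₀ ω - C) * (1 - W ω) / (1 - ℙ[W | m𝓧.comap X] ω) := by
    filter_upwards [he, hbound] with ω h_eq ⟨h_lo, h_hi⟩
    rw [← h_eq]
    exact transformed_outcome_eq_sub_ipw (hWbin ω) (hε.trans_le h_lo).ne'
      (by linarith : 0 < 1 - e ω).ne' _ _ _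
  have hp : ∀ᵐ ω ∂ℙ, ε ≤ ℙ[W | m𝓧.comap X] ω ∧ ℙ[W | m𝓧.comap X] ω ≤ 1 - ε := by
    filter_upwards [he, hbound] with ω h_eq h_bd
    rwa [← h_eq]
  have hind₁ : CondIndepFun (m𝓧.comap X) hX.comap_le (fun ω ↦ Y₁ ω - C) W ℙ :=
    hunconf.comp (measurable_snd.sub_const C) measurable_id
  have hind₀ : CondIndepFun (m𝓧.comap X) hX.comap_le (fun ω ↦ Y₀ ω - C) (fun ω ↦ 1 - W ω) ℙ :=
    hunconf.comp (measurable_fst.sub_const C) (measurable_const.sub measurable_id)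
  rw [integral_congr_ae hdecomp,
    integral_ipw_contrast hind₁ hind₀ (hY₀.sub (integrable_const C)) (hY₁.sub (integrable_const C))
      hW.aestronglyMeasurable (ae_of_all _ fun ω ↦ by rcases hWbin ω with h | h <;> simp [h]) hε hp,
    integral_sub hY₁ (integrable_const C), integral_sub hY₀ (integrable_const C)]
  ring
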